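/- arXiv:1411.0980 — 5 statements merged into one kernel-verified Lean document; each statement's English description precedes it below -/
import Mathlib

section
/- For real z with |z| < 1 and β > 0, the limit as α → 0⁺ of the generalized Mittag-Leffler function E_{α,β}(z) = Σ_{k=0}^∞ z^k / Γ(αk + β) equals 1 / (Γ(β)(1 - z)). -/
open Real Filter Topology

/-! Each term `z ^ k / Γ(αk + β)` tends to `z ^ k / Γ(β)` as `α → 0`, and since `Γ` attains a
positive minimum on `(0, ∞)` the terms are dominated by a multiple of `|z| ^ k`, uniformly in
`α ≥ 0`. Tannery's theorem then gives the limit `∑ z ^ k / Γ(β) = 1 / (Γ(β)(1 - z))`. -/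

/-- The generalized Mittag-Leffler function `E_{α,β}(z) = ∑ z^k / Γ(αk + β)`. -/
noncomputable def mittagLeffler (α β z : ℝ) : ℝ :=
  ∑' k : ℕ, z ^ k / Real.Gamma (α * k + β)

theorem Real.exists_pos_forall_le_Gamma : ∃ m > 0, ∀ x > 0, m ≤ Gamma x := by
  obtain ⟨x₀, hx₀, hmin⟩ := exists_isMinOn_Gamma_Ioi
  exact ⟨Gamma x₀, Gamma_pos_of_pos (zero_lt_one.trans hx₀.1), fun x hx ↦ hmin hx⟩

theorem Real.continuousAt_Gamma_of_pos {s : ℝ} (hs : 0 < s) : ContinuousAt Gamma s :=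
  differentiableOn_Gamma_Ioi.continuousOn.continuousAt (Ioi_mem_nhds hs)

theorem tendsto_pow_div_Gamma_mul_add {β : ℝ} (hβ : 0 < β) (z : ℝ) (k : ℕ) :
    Tendsto (fun α : ℝ ↦ z ^ k / Gamma (α * k + β)) (𝓝 0) (𝓝 (z ^ k / Gamma β)) := by
  have hlin : Tendsto (fun α : ℝ ↦ α * k + β) (𝓝 0) (𝓝 β) :=
    ((continuous_mul_const (k : ℝ)).add continuous_const).tendsto' 0 β (by simp)
  exact tendsto_const_nhds.div ((continuousAt_Gamma_of_pos hβ).tendsto.comp hlin)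
    (Gamma_pos_of_pos hβ).ne'

theorem tendsto_mittagLeffler_nhdsGT_zero_tsum {z β : ℝ} (hz : |z| < 1) (hβ : 0 < β) :
    Tendsto (fun α : ℝ ↦ mittagLeffler α β z) (𝓝[>] 0) (𝓝 (∑' k : ℕ, z ^ k / Gamma β)) := by
  obtain ⟨m, hm, hmΓ⟩ := exists_pos_forall_le_Gamma
  refine tendsto_tsum_of_dominated_convergence (bound := fun k : ℕ ↦ |z| ^ k / m)
    ((summable_geometric_of_lt_one (abs_nonneg z) hz).div_const m)
    (fun k ↦ (tendsto_pow_div_Gamma_mul_add hβ z k).mono_left nhdsWithin_le_nhds) ?_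
  filter_upwards [self_mem_nhdsWithin] with α (hα : 0 < α) k
  have hpos : 0 < α * k + β := by positivity
  rw [norm_div, norm_pow, Real.norm_eq_abs, Real.norm_of_nonneg (Gamma_pos_of_pos hpos).le]
  exact div_le_div_of_nonneg_left (by positivity) hm (hmΓ _ hpos)

/-- For `|z| < 1` and `β > 0`, `E_{α,β}(z) → 1/(Γ(β)(1-z))` as `α → 0⁺`. -/
theorem mittagLeffler_tendsto_alpha_zero (z β : ℝ) (hz : |z| < 1) (hβ : 0 < β) :
    Tendsto (fun α : ℝ => mittagLeffler α β z) (nhdsWithin 0 (Set.Ioi 0))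
      (nhds (1 / (Real.Gamma β * (1 - z)))) := by
  convert tendsto_mittagLeffler_nhdsGT_zero_tsum hz hβ using 2
  have hz1 : 1 - z ≠ 0 := by linarith [le_abs_self z]
  rw [tsum_div_const, tsum_geometric_of_abs_lt_one hz]
  field_simp
end

section
/- Let X ~ MLFD(λ, α, β) with λ, α, β > 0. Then the cumulative distribution function satisfies P(X ≤ r) = 1 − λ^{r+1} E_{α, β+(r+1)α}(λ) / E_{α,β}(λ) for every nonnegative integer r. -/
open Real Filter

/-- The pmf of the Mittag-Leffler function distribution MLFD(λ, α, β). -/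
noncomputable def mlfdPmf (lam α β : ℝ) (k : ℕ) : ℝ :=
  lam ^ k / (Real.Gamma (α * k + β) * mittagLeffler α β lam)

/-!
Splitting the series for `E_{α,β}(λ)` after its first `r + 1` terms and factoring `λ^{r+1}` out of
the tail gives `E_{α,β}(λ) = Σ_{k ≤ r} λ^k / Γ(αk + β) + λ^{r+1} E_{α,β+(r+1)α}(λ)`; dividing by
`E_{α,β}(λ) > 0` is the claim. The only analytic input is convergence of the series, by the ratio
test: log-convexity of `Γ` gives `Γ(x + α) / Γ(x) → ∞`.
-/

-- Log-convexity at `x = a * y + (1 - a) * (y + 1)`, with `y = x + a - 1`, and `Γ(y + 1) = y Γ(y)`.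
theorem rpow_mul_Gamma_le_Gamma_add {x a : ℝ} (ha₀ : 0 < a) (ha₁ : a < 1) (hx : 1 < x + a) :
    (x + a - 1) ^ a * Gamma x ≤ Gamma (x + a) := by
  obtain ⟨y, rfl⟩ : ∃ y, x = y + 1 - a := ⟨x + a - 1, by ring⟩
  have hy : 0 < y := by linarith
  have hGy : 0 < Gamma y := Gamma_pos_of_pos hy
  have hconv := Gamma_mul_add_mul_le_rpow_Gamma_mul_rpow_Gamma (s := y) (t := y + 1)
    hy (by linarith) ha₀ (sub_pos.2 ha₁) (add_sub_cancel a 1)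
  rw [show a * y + (1 - a) * (y + 1) = y + 1 - a by ring, Gamma_add_one hy.ne',
    mul_rpow hy.le hGy.le, mul_left_comm, ← rpow_add hGy, add_sub_cancel, rpow_one] at hconv
  rw [show y + 1 - a + a - 1 = y by ring, show y + 1 - a + a = y + 1 by ring,
    Gamma_add_one hy.ne']
  calc y ^ a * Gamma (y + 1 - a) ≤ y ^ a * (y ^ (1 - a) * Gamma y) := by gcongr
    _ = y * Gamma y := by rw [← mul_assoc, ← rpow_add hy, add_sub_cancel, rpow_one]

theorem tendsto_Gamma_add_div_Gamma_atTop {a : ℝ} (ha : 0 < a) :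
    Tendsto (fun x => Gamma (x + a) / Gamma x) atTop atTop := by
  set b := min a (1 / 2)
  have hb₀ : 0 < b := lt_min ha one_half_pos
  have hb₁ : b < 1 := (min_le_right _ _).trans_lt one_half_lt_one
  have hpow : Tendsto (fun x : ℝ => (x + b - 1) ^ b) atTop atTop :=
    ((tendsto_rpow_atTop hb₀).comp (tendsto_atTop_add_const_right _ (b - 1) tendsto_id)).congr
      fun x => by simp [add_sub_assoc]
  refine tendsto_atTop_mono' _ ?_ hpow
  filter_upwards [eventually_ge_atTop 2] with x hx
  have hGx : 0 < Gamma x := Gamma_pos_of_pos (by linarith)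
  rw [le_div_iff₀ hGx]
  calc (x + b - 1) ^ b * Gamma x ≤ Gamma (x + b) :=
        rpow_mul_Gamma_le_Gamma_add hb₀ hb₁ (by linarith)
    _ ≤ Gamma (x + a) :=
        Gamma_strictMonoOn_Ici.monotoneOn (by simp; linarith) (by simp; linarith)
          (by gcongr; exact min_le_left _ _)

theorem summable_pow_div_Gamma {α : ℝ} (hα : 0 < α) (β z : ℝ) :
    Summable fun k : ℕ => z ^ k / Gamma (α * k + β) := by
  have harg : Tendsto (fun k : ℕ => α * k + β) atTop atTop :=
    tendsto_atTop_add_const_right _ β (tendsto_natCast_atTop_atTop.const_mul_atTop hα)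
  have hratio := (tendsto_Gamma_add_div_Gamma_atTop hα).comp harg
  refine summable_of_ratio_norm_eventually_le one_half_lt_one ?_
  filter_upwards [hratio.eventually_ge_atTop (2 * |z|), harg.eventually_gt_atTop 0]
    with k hk hpos
  set x := α * k + β
  have hGx : 0 < Gamma x := Gamma_pos_of_pos hpos
  have hGxα : 0 < Gamma (x + α) := Gamma_pos_of_pos (by linarith)
  have hgrowth : 2 * |z| * Gamma x ≤ Gamma (x + α) := (le_div_iff₀ hGx).1 hk
  rw [show α * ((k + 1 : ℕ) : ℝ) + β = x + α by push_cast; ring]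
  simp only [norm_div, norm_pow, Real.norm_eq_abs, abs_of_pos hGx, abs_of_pos hGxα]
  rw [div_le_iff₀ hGxα, pow_succ]
  calc |z| ^ k * |z| = 1 / 2 * (|z| ^ k / Gamma x) * (2 * |z| * Gamma x) := by
        field_simp
    _ ≤ 1 / 2 * (|z| ^ k / Gamma x) * Gamma (x + α) := by gcongr

theorem mittagLeffler_pos {α β z : ℝ} (hα : 0 < α) (hβ : 0 < β) (hz : 0 ≤ z) :
    0 < mittagLeffler α β z := by
  refine (summable_pow_div_Gamma hα β z).tsum_pos (fun k => ?_) 0 ?_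
  · have := Gamma_pos_of_pos (show 0 < α * k + β by positivity)
    positivity
  · simpa using Gamma_pos_of_pos hβ

theorem mittagLeffler_eq_sum_range_add {α : ℝ} (hα : 0 < α) (β z : ℝ) (n : ℕ) :
    mittagLeffler α β z
      = ∑ k ∈ Finset.range n, z ^ k / Gamma (α * k + β)
        + z ^ n * mittagLeffler α (β + n * α) z := by
  rw [mittagLeffler, mittagLeffler, ← (summable_pow_div_Gamma hα β z).sum_add_tsum_nat_add n,
    ← tsum_mul_left]
  refine congrArg (_ + ·) (tsum_congr fun k => ?_)
  rw [show α * ((k + n : ℕ) : ℝ) + β = α * k + (β + n * α) by push_cast; ring, pow_add,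
    mul_comm (z ^ k), mul_div_assoc]

theorem sum_range_mlfdPmf {lam α β : ℝ} (hα : 0 < α) (hE : mittagLeffler α β lam ≠ 0) (n : ℕ) :
    ∑ k ∈ Finset.range n, mlfdPmf lam α β k
      = 1 - lam ^ n * mittagLeffler α (β + n * α) lam / mittagLeffler α β lam := by
  simp only [eq_sub_iff_add_eq, mlfdPmf, ← div_div, ← Finset.sum_div]
  rw [← add_div, ← mittagLeffler_eq_sum_range_add hα, div_self hE]

/-- CDF: `P(X ≤ r) = 1 − λ^{r+1} E_{α,β+(r+1)α}(λ)/E_{α,β}(λ)`. -/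
theorem mlfd_cdf (lam α β : ℝ) (hlam : 0 < lam) (hα : 0 < α) (hβ : 0 < β) (r : ℕ) :
    ∑ k ∈ Finset.range (r + 1), mlfdPmf lam α β k
      = 1 - lam ^ (r + 1) * mittagLeffler α (β + (r + 1) * α) lam / mittagLeffler α β lam := by
  simpa using sum_range_mlfdPmf hα (mittagLeffler_pos hα hβ hlam.le).ne' (r + 1)
end

section
/- The pmf of MLFD(λ, α, β) is log-concave: for all k ≥ 0, P(k+1)² ≥ P(k)·P(k+2), equivalently P(k+1)/P(k) is non-increasing in k. This follows from the inequality Γ(αk+β)·Γ(αk+2α+β) ≥ Γ(αk+α+β)² for α, β > 0. -/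
open Real

lemma gamma_midpoint_sq_le {x y : ℝ} (hx : 0 < x) (hy : 0 < y) :
    Real.Gamma ((x + y) / 2) ^ 2 ≤ Real.Gamma x * Real.Gamma y := by
  have hm : 0 < (x + y) / 2 := by linarith
  have h := Real.convexOn_log_Gamma.2 (Set.mem_Ioi.mpr hx) (Set.mem_Ioi.mpr hy)
    (by norm_num : (0:ℝ) ≤ 1/2) (by norm_num : (0:ℝ) ≤ 1/2) (by norm_num)
  simp only [smul_eq_mul, Function.comp_apply] at h
  have h2 : 2 * Real.log (Real.Gamma ((x + y) / 2)) ≤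
      Real.log (Real.Gamma x) + Real.log (Real.Gamma y) := by
    have heq : 1/2 * x + 1/2 * y = (x + y) / 2 := by ring
    rw [heq] at h; linarith
  have hGx := Real.Gamma_pos_of_pos hx
  have hGy := Real.Gamma_pos_of_pos hy
  have hGm := Real.Gamma_pos_of_pos hm
  have h3 := Real.exp_le_exp.mpr h2
  rwa [Real.exp_add, Real.exp_log hGx, Real.exp_log hGy,
    show 2 * Real.log (Real.Gamma ((x+y)/2)) = Real.log (Real.Gamma ((x+y)/2)) +
      Real.log (Real.Gamma ((x+y)/2)) by ring,
    Real.exp_add, Real.exp_log hGm, ← sq] at h3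

/-- The MLFD pmf is log-concave: `P(k+1)² ≥ P(k)·P(k+2)`. -/
theorem mlfd_log_concave (lam α β : ℝ) (hlam : 0 < lam) (hα : 0 < α) (hβ : 0 < β)
    (k : ℕ) :
    mlfdPmf lam α β k * mlfdPmf lam α β (k + 2) ≤ (mlfdPmf lam α β (k + 1)) ^ 2 := by
  by_cases hE : mittagLeffler α β lam = 0
  · simp [mlfdPmf, hE]
  have hE2 : 0 < mittagLeffler α β lam ^ 2 := by positivity
  have hapos : 0 < α * (k : ℕ) + β := by positivity
  have hcpos : 0 < α * ((k : ℕ) + 2) + β := by positivity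
  have hbpos : 0 < α * ((k : ℕ) + 1) + β := by positivity
  have hkey : Real.Gamma (α * ((k : ℕ) + 1) + β) ^ 2 ≤
      Real.Gamma (α * (k : ℕ) + β) * Real.Gamma (α * ((k : ℕ) + 2) + β) := by
    have hb : α * ((k : ℕ) + 1) + β = ((α * (k : ℕ) + β) + (α * ((k : ℕ) + 2) + β)) / 2 := by
      ring
    rw [hb]; exact gamma_midpoint_sq_le hapos hcpos
  have hGa := Real.Gamma_pos_of_pos hapos
  have hGc := Real.Gamma_pos_of_pos hcpos
  have hGb := Real.Gamma_pos_of_pos hbpos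
  unfold mlfdPmf
  push_cast
  rw [div_mul_div_comm, div_pow, mul_pow,
    show lam ^ k * lam ^ (k + 2) = (lam ^ (k + 1)) ^ 2 by ring,
    show Real.Gamma (α * k + β) * mittagLeffler α β lam *
        (Real.Gamma (α * (k + 2) + β) * mittagLeffler α β lam) =
      Real.Gamma (α * k + β) * Real.Gamma (α * (k + 2) + β) * mittagLeffler α β lam ^ 2 by ring]
  apply div_le_div_of_nonneg_left (by positivity) (by positivity)
  exact mul_le_mul_of_nonneg_right hkey (sq_nonneg _)
end

section
/- Let X ~ MLFD(λ, α, β) with λ, α, β > 0, and let k ≥ 1 be an integer. If Γ(αk+β)/Γ(αk−α+β) < λ < Γ(αk+α+β)/Γ(αk+β), then X has a unique mode at k: P(X = k) > P(X = j) for all j ≠ k. -/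
open Real

/-- Log-convexity of Gamma: the ratio `Γ(x+α)/Γ(x)` is monotone, in multiplied form. -/
lemma gamma_ratio_mono {α x y : ℝ} (hα : 0 < α) (hx : 0 < x) (hxy : x ≤ y) :
    Real.Gamma (x + α) * Real.Gamma y ≤ Real.Gamma (y + α) * Real.Gamma x := by
  rcases eq_or_lt_of_le hxy with rfl | hxy
  · rw [mul_comm]
  have hy : 0 < y := hx.trans hxy
  have hxa : (0:ℝ) < x + α := by linarith
  have hya : (0:ℝ) < y + α := by linarith
  have hconv := Real.convexOn_log_Gamma
  -- slope(x, x+α) ≤ slope(x, y+α)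
  have s1 := hconv.secant_mono (Set.mem_Ioi.mpr hx) (Set.mem_Ioi.mpr hxa)
      (Set.mem_Ioi.mpr hya) (by linarith) (by linarith) (by linarith)
  -- slope(y+α, x) ≤ slope(y+α, y)
  have s2 := hconv.secant_mono (Set.mem_Ioi.mpr hya) (Set.mem_Ioi.mpr hx)
      (Set.mem_Ioi.mpr hy) (by linarith) (by linarith) hxy.le
  simp only [Function.comp_apply] at s1 s2
  have e1 : (Real.log (Real.Gamma (x + α)) - Real.log (Real.Gamma x)) / α
      ≤ (Real.log (Real.Gamma (y + α)) - Real.log (Real.Gamma y)) / α := by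
    have h12 : (Real.log (Real.Gamma (x+α)) - Real.log (Real.Gamma x)) / (x + α - x)
        ≤ (Real.log (Real.Gamma (y+α)) - Real.log (Real.Gamma y)) / (y + α - y) := by
      calc (Real.log (Real.Gamma (x+α)) - Real.log (Real.Gamma x)) / (x + α - x)
          ≤ (Real.log (Real.Gamma (y+α)) - Real.log (Real.Gamma x)) / (y + α - x) := s1
        _ = (Real.log (Real.Gamma x) - Real.log (Real.Gamma (y+α))) / (x - (y + α)) := by
            rw [← neg_div_neg_eq]; ring_nf
        _ ≤ (Real.log (Real.Gamma y) - Real.log (Real.Gamma (y+α))) / (y - (y + α)) := s2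
        _ = (Real.log (Real.Gamma (y+α)) - Real.log (Real.Gamma y)) / (y + α - y) := by
            rw [← neg_div_neg_eq]; ring_nf
    simpa using h12
  have e2 : Real.log (Real.Gamma (x + α)) + Real.log (Real.Gamma y)
      ≤ Real.log (Real.Gamma (y + α)) + Real.log (Real.Gamma x) := by
    have := mul_le_mul_of_nonneg_right e1 hα.le
    rw [div_mul_cancel₀ _ hα.ne', div_mul_cancel₀ _ hα.ne'] at this
    linarith
  have := Real.exp_le_exp.mpr e2
  rwa [Real.exp_add, Real.exp_add, Real.exp_log (Real.Gamma_pos_of_pos hxa),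
    Real.exp_log (Real.Gamma_pos_of_pos hya), Real.exp_log (Real.Gamma_pos_of_pos hx),
    Real.exp_log (Real.Gamma_pos_of_pos hy)] at this

/-- Growth: `Γ(x+α) ≥ (x-1)^α Γ(x)` for `x > 1`. -/
lemma gamma_ratio_lb {α x : ℝ} (hα : 0 < α) (hx : 1 < x) :
    Real.exp (α * Real.log (x - 1)) * Real.Gamma x ≤ Real.Gamma (x + α) := by
  have hx1 : (0:ℝ) < x - 1 := by linarith
  have hx0 : (0:ℝ) < x := by linarith
  have hxa : (0:ℝ) < x + α := by linarith
  have hconv := Real.convexOn_log_Gamma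
  -- slope(x-1, x) ≤ slope(x-1... use a = x: slope(x-1, x) ≤ slope(x+α, x)
  have s := hconv.secant_mono (Set.mem_Ioi.mpr hx0) (Set.mem_Ioi.mpr hx1)
      (Set.mem_Ioi.mpr hxa) (by linarith) (by linarith) (by linarith)
  simp only [Function.comp_apply] at s
  have hgam : Real.Gamma x = (x - 1) * Real.Gamma (x - 1) := by
    have := Real.Gamma_add_one (s := x - 1) (by positivity)
    simpa using this
  have hlog : Real.log (Real.Gamma (x-1)) - Real.log (Real.Gamma x) = - Real.log (x - 1) := by
    rw [hgam, Real.log_mul (by positivity) (Real.Gamma_pos_of_pos hx1).ne']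
    ring
  have s' : Real.log (x - 1) ≤ (Real.log (Real.Gamma (x + α)) - Real.log (Real.Gamma x)) / α := by
    have h1 : (Real.log (Real.Gamma (x-1)) - Real.log (Real.Gamma x)) / (x - 1 - x)
        = Real.log (x - 1) := by rw [hlog]; ring
    calc Real.log (x-1) = _ := h1.symm
      _ ≤ _ := s
      _ = (Real.log (Real.Gamma (x + α)) - Real.log (Real.Gamma x)) / α := by ring_nf
  have e2 : α * Real.log (x - 1) + Real.log (Real.Gamma x) ≤ Real.log (Real.Gamma (x + α)) := by
    rw [le_div_iff₀ hα] at s'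
    linarith
  have := Real.exp_le_exp.mpr e2
  rwa [Real.exp_add, Real.exp_log (Real.Gamma_pos_of_pos hx0),
    Real.exp_log (Real.Gamma_pos_of_pos hxa)] at this

lemma ml_summable {lam α β : ℝ} (hlam : 0 < lam) (hα : 0 < α) (hβ : 0 < β) :
    Summable (fun k : ℕ => lam ^ k / Real.Gamma (α * k + β)) := by
  obtain ⟨N, hN⟩ := exists_nat_ge ((1 + Real.exp (Real.log (2 * lam) / α) + 1) / α)
  apply summable_of_ratio_norm_eventually_le (r := 1/2) (by norm_num)
  filter_upwards [Filter.eventually_ge_atTop N] with k hkN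
  have hxk : 1 + Real.exp (Real.log (2 * lam) / α) + 1 ≤ α * k + β := by
    have : (1 + Real.exp (Real.log (2 * lam) / α) + 1) ≤ α * N := by
      rw [div_le_iff₀ hα] at hN; linarith [hN]
    have h2 : α * N ≤ α * k := by
      apply mul_le_mul_of_nonneg_left _ hα.le
      exact_mod_cast hkN
    linarith
  set x : ℝ := α * k + β with hxdef
  have hx1 : 1 < x := by
    have := Real.exp_pos (Real.log (2 * lam) / α); linarith
  have hx0 : 0 < x := by linarith
  have hgrow := gamma_ratio_lb hα hx1
  have hexp : 2 * lam ≤ Real.exp (α * Real.log (x - 1)) := by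
    calc 2 * lam = Real.exp (Real.log (2 * lam)) := (Real.exp_log (by linarith)).symm
      _ ≤ Real.exp (α * Real.log (x - 1)) := by
          apply Real.exp_le_exp.mpr
          have hlog : Real.log (2 * lam) / α ≤ Real.log (x - 1) := by
            calc Real.log (2*lam)/α = Real.log (Real.exp (Real.log (2*lam)/α)) :=
                  (Real.log_exp _).symm
              _ ≤ Real.log (x - 1) := by
                  apply Real.log_le_log (Real.exp_pos _); linarith
          calc α * Real.log (x-1) ≥ α * (Real.log (2*lam)/α) :=
                mul_le_mul_of_nonneg_left hlog hα.le
            _ = Real.log (2*lam) := by field_simp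
  have hkey : 2 * lam * Real.Gamma x ≤ Real.Gamma (x + α) := by
    calc 2 * lam * Real.Gamma x ≤ Real.exp (α * Real.log (x-1)) * Real.Gamma x :=
          mul_le_mul_of_nonneg_right hexp (Real.Gamma_pos_of_pos hx0).le
      _ ≤ Real.Gamma (x + α) := hgrow
  have hcast : α * ((k:ℝ) + 1) + β = x + α := by rw [hxdef]; ring
  have hGx : 0 < Real.Gamma x := Real.Gamma_pos_of_pos hx0
  have hGxa : 0 < Real.Gamma (x + α) := Real.Gamma_pos_of_pos (by linarith)
  rw [Real.norm_eq_abs, Real.norm_eq_abs, abs_of_pos (by positivity),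
    abs_of_pos (by positivity)]
  push_cast
  rw [hcast, div_le_iff₀ hGxa]
  have ht : 0 < lam ^ k / Real.Gamma x := by positivity
  have hpow : lam ^ (k+1) = lam * (lam ^ k / Real.Gamma x) * Real.Gamma x := by
    field_simp; ring
  rw [hpow]
  nlinarith [mul_le_mul_of_nonneg_left hkey ht.le]

/-- Unique mode at `k`: if `Γ(αk+β)/Γ(αk−α+β) < λ < Γ(αk+α+β)/Γ(αk+β)` then
`P(X = k) > P(X = j)` for all `j ≠ k`. -/
theorem mlfd_unique_mode (lam α β : ℝ) (hlam : 0 < lam) (hα : 0 < α) (hβ : 0 < β)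
    (k : ℕ) (hk : 1 ≤ k)
    (h1 : Real.Gamma (α * k + β) / Real.Gamma (α * k - α + β) < lam)
    (h2 : lam < Real.Gamma (α * k + α + β) / Real.Gamma (α * k + β)) :
    ∀ j : ℕ, j ≠ k → mlfdPmf lam α β j < mlfdPmf lam α β k := by
  have hG : ∀ j : ℕ, 0 < Real.Gamma (α * j + β) := fun j =>
    Real.Gamma_pos_of_pos (by positivity)
  have hML : 0 < mittagLeffler α β lam := by
    apply Summable.tsum_pos (ml_summable hlam hα hβ) (fun i => by positivity) 0
    simp only [pow_zero, Nat.cast_zero, mul_zero, zero_add]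
    exact div_pos one_pos (Real.Gamma_pos_of_pos hβ)
  set Q : ℕ → ℝ := fun j => lam ^ j / Real.Gamma (α * j + β) with hQ
  -- step up: j < k → Q j < Q (j+1)
  have hy0 : (0:ℝ) < α * k - α + β := by
    have : (1:ℝ) ≤ (k:ℝ) := by exact_mod_cast hk
    nlinarith
  have hup : ∀ j : ℕ, j < k → Q j < Q (j + 1) := by
    intro j hj
    have hx : (0:ℝ) < α * j + β := by positivity
    have hxy : α * j + β ≤ α * k - α + β := by
      have : (j:ℝ) + 1 ≤ (k:ℝ) := by exact_mod_cast hj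
      nlinarith
    have hmono := gamma_ratio_mono hα hx hxy
    have h1' : Real.Gamma (α * k - α + β + α) < lam * Real.Gamma (α * k - α + β) := by
      rw [div_lt_iff₀ (Real.Gamma_pos_of_pos hy0)] at h1
      have : α * k - α + β + α = α * k + β := by ring
      rw [this]; linarith
    have hkey : Real.Gamma (α * j + β + α) < lam * Real.Gamma (α * j + β) := by
      have hGy := Real.Gamma_pos_of_pos hy0
      have h5 : Real.Gamma (α * k - α + β + α) * Real.Gamma (α * j + β)
          < lam * Real.Gamma (α * j + β) * Real.Gamma (α * k - α + β) := by
        nlinarith [mul_lt_mul_of_pos_right h1' (hG j)]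
      have h6 : Real.Gamma (α * j + β + α) * Real.Gamma (α * k - α + β)
          < (lam * Real.Gamma (α * j + β)) * Real.Gamma (α * k - α + β) := by
        nlinarith [hmono.trans_lt h5]
      exact lt_of_mul_lt_mul_right h6 hGy.le
    have hcast : α * ((j:ℝ)+1) + β = α * j + β + α := by ring
    simp only [hQ]
    push_cast
    rw [hcast, div_lt_div_iff₀ (hG j) (by rw [← hcast]; positivity)]
    calc lam ^ j * Real.Gamma (α * j + β + α)
        < lam ^ j * (lam * Real.Gamma (α * j + β)) := by
          apply mul_lt_mul_of_pos_left hkey (by positivity)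
      _ = lam ^ (j+1) * Real.Gamma (α * j + β) := by ring
  -- step down: k ≤ j → Q (j+1) < Q j
  have hdown : ∀ j : ℕ, k ≤ j → Q (j + 1) < Q j := by
    intro j hj
    have hx0 : (0:ℝ) < α * k + β := by positivity
    have hxy : α * k + β ≤ α * j + β := by
      have : (k:ℝ) ≤ (j:ℝ) := by exact_mod_cast hj
      nlinarith
    have hmono := gamma_ratio_mono hα hx0 hxy
    have h2' : lam * Real.Gamma (α * k + β) < Real.Gamma (α * k + β + α) := by
      rw [lt_div_iff₀ (hG k)] at h2
      have : α * k + β + α = α * k + α + β := by ring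
      rw [this]; linarith
    have hkey : lam * Real.Gamma (α * j + β) < Real.Gamma (α * j + β + α) := by
      have hGj := hG j
      have hGk := hG k
      have h3 : lam * Real.Gamma (α * k + β) * Real.Gamma (α * j + β)
          < Real.Gamma (α * k + β + α) * Real.Gamma (α * j + β) := by nlinarith
      have h4 : lam * Real.Gamma (α * k + β) * Real.Gamma (α * j + β)
          < Real.Gamma (α * j + β + α) * Real.Gamma (α * k + β) := lt_of_lt_of_le h3 hmono
      nlinarith
    have hcast : α * ((j:ℝ)+1) + β = α * j + β + α := by ring
    simp only [hQ]
    push_cast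
    rw [hcast, div_lt_div_iff₀ (by rw [← hcast]; positivity) (hG j)]
    calc lam ^ (j+1) * Real.Gamma (α * j + β)
        = lam ^ j * (lam * Real.Gamma (α * j + β)) := by ring
      _ < lam ^ j * Real.Gamma (α * j + β + α) := by
          apply mul_lt_mul_of_pos_left hkey (by positivity)
  -- upward chain: Q j ≤ Q k for j ≤ k
  have chain_up : ∀ n : ℕ, ∀ j : ℕ, j + n = k → Q j ≤ Q k := by
    intro n
    induction n with
    | zero => intro j hj; simp at hj; rw [hj]
    | succ m ih =>
        intro j hj
        have hjk : j < k := by omega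
        exact le_trans (hup j hjk).le (ih (j+1) (by omega))
  -- downward chain: Q (k + n) ≤ Q k
  have chain_down : ∀ n : ℕ, Q (k + n) ≤ Q k := by
    intro n
    induction n with
    | zero => simp
    | succ m ih =>
        have := hdown (k + m) (Nat.le_add_right _ _)
        refine le_of_lt ?_
        calc Q (k + (m+1)) = Q ((k + m) + 1) := by ring_nf
          _ < Q (k + m) := this
          _ ≤ Q k := ih
  have hQlt : ∀ j : ℕ, j ≠ k → Q j < Q k := by
    intro j hj
    rcases lt_or_gt_of_ne hj with hlt | hgt
    · exact lt_of_lt_of_le (hup j hlt) (chain_up (k - (j+1)) (j+1) (by omega))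
    · have hjk : j = (k + (j - k - 1)) + 1 := by omega
      calc Q j = Q ((k + (j - k - 1)) + 1) := by rw [← hjk]
        _ < Q (k + (j - k - 1)) := hdown _ (Nat.le_add_right _ _)
        _ ≤ Q k := chain_down _
  intro j hj
  have : mlfdPmf lam α β j = Q j / mittagLeffler α β lam := by
    simp only [mlfdPmf, hQ, div_div]
  rw [this]
  have hk' : mlfdPmf lam α β k = Q k / mittagLeffler α β lam := by
    simp only [mlfdPmf, hQ, div_div]
  rw [hk']
  exact div_lt_div_of_pos_right (hQlt j hj) hML  -- name check
end

section
/- Let X ~ MLFD(λ, α, β) with λ, α, β > 0. If λ < Γ(α+β)/Γ(β), then the pmf is non-increasing, i.e., P(X = k+1) ≤ P(X = k) for all k ≥ 0; in particular the mode is at 0. -/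
open Real

/-! The ratio `P(k+1)/P(k) = λ Γ(αk+β)/Γ(αk+β+α)` is non-increasing in `k`, because a log-convex
function has increasing differences: `log Γ(x+α) - log Γ x` grows with `x`. So `P` is
non-increasing as soon as the ratio at `k = 0`, namely `λ Γ(β)/Γ(α+β)`, is below `1`. -/

theorem ConvexOn.sub_le_sub_of_le {𝕜 : Type*} [Field 𝕜] [LinearOrder 𝕜] [IsStrictOrderedRing 𝕜]
    {s : Set 𝕜} {f : 𝕜 → 𝕜} (hf : ConvexOn 𝕜 s f) {x y d : 𝕜} (hx : x ∈ s) (hyd : y + d ∈ s)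
    (hxy : x ≤ y) (hd : 0 ≤ d) : f (x + d) - f x ≤ f (y + d) - f y := by
  rcases hd.eq_or_lt with rfl | hd
  · simp
  have hIcc : Set.Icc x (y + d) ⊆ s := (hf.1.ordConnected).out hx hyd
  have hxd : x + d ∈ s := hIcc ⟨by linarith, by linarith⟩
  have hy : y ∈ s := hIcc ⟨hxy, by linarith⟩
  have hx_lt : x < y + d := by linarith
  have hslope : slope f x (x + d) ≤ slope f y (y + d) :=
    calc slope f x (x + d) ≤ slope f x (y + d) :=
          hf.slope_mono hx ⟨hxd, (lt_add_of_pos_right x hd).ne'⟩ ⟨hyd, hx_lt.ne'⟩ (by linarith)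
      _ = slope f (y + d) x := slope_comm f x (y + d)
      _ ≤ slope f (y + d) y :=
          hf.slope_mono hyd ⟨hx, hx_lt.ne⟩ ⟨hy, (lt_add_of_pos_right y hd).ne⟩ hxy
      _ = slope f y (y + d) := slope_comm f (y + d) y
  simpa [slope_def_field, div_le_div_iff_of_pos_right hd] using hslope

theorem Real.Gamma_add_div_Gamma_le {x y a : ℝ} (hx : 0 < x) (hxy : x ≤ y) (ha : 0 ≤ a) :
    Gamma (x + a) / Gamma x ≤ Gamma (y + a) / Gamma y := by
  have hy : 0 < y := hx.trans_le hxy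
  have hΓx := Gamma_pos_of_pos hx
  have hΓy := Gamma_pos_of_pos hy
  have hΓxa := Gamma_pos_of_pos (add_pos_of_pos_of_nonneg hx ha)
  have hΓya := Gamma_pos_of_pos (add_pos_of_pos_of_nonneg hy ha)
  have hlog := convexOn_log_Gamma.sub_le_sub_of_le hx (add_pos_of_pos_of_nonneg hy ha) hxy ha
  simp only [Function.comp_apply] at hlog
  rwa [← log_le_log_iff (div_pos hΓxa hΓx) (div_pos hΓya hΓy), log_div hΓxa.ne' hΓx.ne',
    log_div hΓya.ne' hΓy.ne']

theorem mittagLeffler_nonneg {α β z : ℝ} (hα : 0 ≤ α) (hβ : 0 < β) (hz : 0 ≤ z) :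
    0 ≤ mittagLeffler α β z :=
  tsum_nonneg fun k => div_nonneg (pow_nonneg hz k) (Gamma_pos_of_pos (by positivity)).le

theorem mlfdPmf_nonneg {lam α β : ℝ} (hlam : 0 ≤ lam) (hα : 0 ≤ α) (hβ : 0 < β) (k : ℕ) :
    0 ≤ mlfdPmf lam α β k :=
  div_nonneg (pow_nonneg hlam k)
    (mul_nonneg (Gamma_pos_of_pos (by positivity)).le (mittagLeffler_nonneg hα hβ hlam))

theorem mlfdPmf_succ {lam α β : ℝ} {k : ℕ} (hΓ : Gamma (α * k + β) ≠ 0) :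
    mlfdPmf lam α β (k + 1) =
      lam * Gamma (α * k + β) / Gamma (α * k + β + α) * mlfdPmf lam α β k := by
  have hcast : α * ((k + 1 : ℕ) : ℝ) + β = α * k + β + α := by push_cast; ring
  simp only [mlfdPmf, hcast]
  field_simp
  ring

/-- If `λ < Γ(α+β)/Γ(β)` the pmf is non-increasing, with mode at 0. -/
theorem mlfd_mode_at_zero (lam α β : ℝ) (hlam : 0 < lam) (hα : 0 < α) (hβ : 0 < β)
    (h : lam < Real.Gamma (α + β) / Real.Gamma β) :
    (∀ k : ℕ, mlfdPmf lam α β (k + 1) ≤ mlfdPmf lam α β k) ∧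
      (∀ k : ℕ, mlfdPmf lam α β k ≤ mlfdPmf lam α β 0) := by
  have hstep (k : ℕ) : mlfdPmf lam α β (k + 1) ≤ mlfdPmf lam α β k := by
    have hΓ : 0 < Gamma (α * k + β) := Gamma_pos_of_pos (by positivity)
    have hratio : lam * Gamma (α * k + β) / Gamma (α * k + β + α) ≤ 1 := by
      rw [div_le_one (Gamma_pos_of_pos (by positivity)), ← le_div_iff₀ hΓ]
      calc lam ≤ Gamma (β + α) / Gamma β := by rw [add_comm]; exact h.le
        _ ≤ Gamma (α * k + β + α) / Gamma (α * k + β) :=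
          Gamma_add_div_Gamma_le hβ (by simp; positivity) hα.le
    rw [mlfdPmf_succ hΓ.ne']
    exact mul_le_of_le_one_left (mlfdPmf_nonneg hlam.le hα.le hβ k) hratio
  have hanti : Antitone (mlfdPmf lam α β) := antitone_nat_of_succ_le hstep
  exact ⟨hstep, fun k => hanti k.zero_le⟩
end
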